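/- Cartan's magic formula for an odd vector field: let V : Fin n → Λ be a vector field on ℝ^{0|n} all of whose components V α are even elements of Λ (so V is an odd vector field). Then V_↑ ∘ Q − Q ∘ V_↑ = V^↑ as linear endomorphisms of P, where V_↑ := Σ_α (pderiv α) ⊗ (left multiplication by V α) is the inner product i_V and V^↑ := Σ_α id ⊗ ((left multiplication by V α) ∘ ∂_α) − Σ_{α,β} ((left multiplication by X β) ∘ pderiv α) ⊗ (left multiplication by ∂_β(V α)) is the Lie derivative L_V. -/
import Mathlib


open TensorProduct

noncomputable section

/-- The Grassmann algebra on `n` odd generators `ξ^α`. -/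
abbrev Lam (n : ℕ) : Type := ExteriorAlgebra ℝ (Fin n → ℝ)

/-- The odd coordinate `ξ^α`, i.e. the generator `e_α = ι (Pi.single α 1)`. -/
def gen {n : ℕ} (α : Fin n) : Lam n := ExteriorAlgebra.ι ℝ (Pi.single α 1)

/-- The odd partial derivative `∂/∂ξ^α`: left contraction with the `α`-th
coordinate functional, the unique antiderivation sending `e_β` to `δ_{αβ}`. -/
def pd {n : ℕ} (α : Fin n) : Lam n →ₗ[ℝ] Lam n :=
  CliffordAlgebra.contractLeft (Q := (0 : QuadraticForm ℝ (Fin n → ℝ))) (LinearMap.proj α)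

/-- The algebra of (pseudo)differential forms on `ℝ^{0|n}`:
polynomials in the even fiber coordinates `y^α` with Grassmann coefficients. -/
abbrev Forms (n : ℕ) : Type := MvPolynomial (Fin n) ℝ ⊗[ℝ] Lam n

/-- The de Rham differential `Q = y^α ∂_{ξ^α}`. -/
def deRham (n : ℕ) : Forms n →ₗ[ℝ] Forms n :=
  ∑ α : Fin n, TensorProduct.map (LinearMap.mulLeft ℝ (MvPolynomial.X α)) (pd α)


/-- The inner product `i_V = V^α ∂_{y^α}` of the vector field `V = V^α ∂_{ξ^α}`. -/
def innerProd {n : ℕ} (V : Fin n → Lam n) : Forms n →ₗ[ℝ] Forms n :=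
  ∑ α : Fin n, TensorProduct.map (MvPolynomial.pderiv α).toLinearMap
    (LinearMap.mulLeft ℝ (V α))

/-- The Lie derivative `L_V = V^α ∂_{ξ^α} - Q(V^α) ∂_{y^α}` of an odd vector field. -/
def lieDerOdd {n : ℕ} (V : Fin n → Lam n) : Forms n →ₗ[ℝ] Forms n :=
  (∑ α : Fin n, TensorProduct.map LinearMap.id (LinearMap.mulLeft ℝ (V α) ∘ₗ pd α)) -
  ∑ α : Fin n, ∑ β : Fin n, TensorProduct.map
    (LinearMap.mulLeft ℝ (MvPolynomial.X β) ∘ₗ (MvPolynomial.pderiv α).toLinearMap)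
    (LinearMap.mulLeft ℝ (pd β (V α)))

lemma contract_even_mul {R M : Type*} [CommRing R] [AddCommGroup M] [Module R M]
    {Q : QuadraticForm R M} (d : Module.Dual R M) {a : CliffordAlgebra Q}
    (ha : a ∈ CliffordAlgebra.evenOdd Q 0) (b : CliffordAlgebra Q) :
    CliffordAlgebra.contractLeft d (a * b) =
      CliffordAlgebra.contractLeft d a * b + a * CliffordAlgebra.contractLeft d b := by
  induction a, ha using CliffordAlgebra.even_induction generalizing b with
  | algebraMap r =>
      rw [CliffordAlgebra.contractLeft_algebraMap_mul, CliffordAlgebra.contractLeft_algebraMap,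
        zero_mul, zero_add]
  | add x y hx hy ihx ihy =>
      simp only [add_mul, map_add, ihx, ihy]; abel
  | ι_mul_ι_mul m₁ m₂ x hx ih =>
      simp only [mul_assoc, CliffordAlgebra.contractLeft_ι_mul, map_sub, LinearMap.map_smul,
        ih, mul_add, mul_sub, sub_mul, smul_sub, add_mul, smul_mul_assoc, mul_smul_comm]
      abel

set_option maxHeartbeats 1600000 in
/-- Cartan's magic formula for an odd vector field (all components even in `Λ`):
`i_V ∘ Q - Q ∘ i_V = L_V`. -/
theorem cartan_magic_odd (n : ℕ) (hn : 1 ≤ n) (V : Fin n → Lam n)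
    (hV : ∀ α, V α ∈ CliffordAlgebra.evenOdd (0 : QuadraticForm ℝ (Fin n → ℝ)) 0) :
    innerProd V ∘ₗ deRham n - deRham n ∘ₗ innerProd V = lieDerOdd V := by
  apply TensorProduct.ext'
  intro p x
  have h1 : ∀ (α β : Fin n), MvPolynomial.pderiv α (MvPolynomial.X β * p) =
      MvPolynomial.X β * MvPolynomial.pderiv α p + if α = β then p else 0 := by
    intro α β
    rcases eq_or_ne α β with rfl | h
    · simp [MvPolynomial.pderiv_mul]
    · simp [MvPolynomial.pderiv_mul, h, Ne.symm h]
  have h2 : ∀ (α β : Fin n) (y : Lam n), pd β (V α * y) =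
      pd β (V α) * y + V α * pd β y := fun α β y =>
    contract_even_mul _ (hV α) y
  simp only [innerProd, deRham, lieDerOdd, LinearMap.sub_apply, LinearMap.comp_apply,
    LinearMap.sum_apply, map_sum, TensorProduct.map_tmul, LinearMap.mulLeft_apply,
    LinearMap.id_coe, id_eq, LinearMap.coe_comp, Function.comp_apply, Derivation.coeFn_coe,
    h1, h2, TensorProduct.add_tmul, TensorProduct.tmul_add, TensorProduct.ite_tmul,
    Finset.sum_add_distrib, Finset.sum_ite_eq, Finset.sum_ite_eq', Finset.mem_univ, if_true,
    Finset.sum_sub_distrib]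
  rw [Finset.sum_comm]
  abel
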